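/- Let Σ = {0, 1, …, k−1} be a finite alphabet with k ≥ 2 symbols and let x be a word over Σ. Then there exist real 2×2 affine matrices A_σ (σ ∈ Σ) and A_$ (each column summing to 1), an affine vector v₀ ∈ ℝ², and an accepting coordinate such that the resulting 2-state AfA accepts x with probability 1 and accepts every word z ≠ x over Σ with probability at most 2/3. (In particular, for σ ∈ Σ one may take A_σ = [[k + σ, σ], [1 − k − σ, 1 − σ]], under which the state vector after reading a word z equals (e_k(z), 1 − e_k(z)), where e_k(z) is the value of the k-ary numeral 1z.) -/

import Mathlib

/-!
Reading a letter `σ` maps the affine vector `(t, 1 - t)` to `(k t + σ, 1 - (k t + σ))`, so after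
reading `z` from `(1, 0)` the state is `(e, 1 - e)` with `e = e_k(z)`, the value of the numeral
`1z`; this value determines `z`. With `E = e_k(x)`, the end-marker sends `(e, 1 - e)` to
`(1 - 2d, 2d)` where `d = e - E`, so `x` is accepted with probability `1`, while every other word
has `|d| ≥ 1` and hence acceptance probability `|1 - 2d| / (|1 - 2d| + |2d|) ≤ 2/3`.
-/

open Matrix

namespace AffineAutomaton

/-- The value `e_k(z)` of the `k`-ary numeral `1z`. -/
def numeral (k : ℕ) (z : List (Fin k)) : ℕ :=
  z.foldl (fun n (c : Fin k) => k * n + (c : ℕ)) 1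

lemma numeral_eq_ofDigits (k : ℕ) (z : List (Fin k)) :
    numeral k z = Nat.ofDigits k (z.reverse.map Fin.val ++ [1]) := by
  induction z using List.reverseRecOn with
  | nil => simp [numeral]
  | append_singleton z c ih =>
    rw [numeral, List.foldl_append, ← numeral, ih]
    simp [Nat.ofDigits_cons, add_comm]

lemma numeral_injective {k : ℕ} (hk : 2 ≤ k) : Function.Injective (numeral k) := by
  intro z w h
  have hdigits (u : List (Fin k)) :
      Nat.digits k (numeral k u) = u.reverse.map Fin.val ++ [1] := by
    rw [numeral_eq_ofDigits]
    refine Nat.digits_ofDigits k hk _ ?_ (by simp)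
    simp only [List.mem_append, List.mem_map, List.mem_singleton]
    rintro l (⟨c, -, rfl⟩ | rfl) <;> omega
  have hzw := congrArg (Nat.digits k) h
  rw [hdigits, hdigits] at hzw
  exact List.reverse_injective
    (List.map_injective_iff.mpr Fin.val_injective (List.append_cancel_right hzw))

lemma one_le_abs_natCast_sub_natCast {m n : ℕ} (h : m ≠ n) : 1 ≤ |(m : ℝ) - n| := by
  have : (1 : ℤ) ≤ |(m : ℤ) - n| := Int.one_le_abs (sub_ne_zero.mpr (by exact_mod_cast h))
  exact_mod_cast this

def affineVec (t : ℝ) : Fin 2 → ℝ := ![t, 1 - t]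

def letterMatrix (k : ℕ) (σ : Fin k) : Matrix (Fin 2) (Fin 2) ℝ :=
  !![k + σ, σ; 1 - k - σ, 1 - σ]

def endMatrix (E : ℝ) : Matrix (Fin 2) (Fin 2) ℝ :=
  !![2 * E - 1, 1 + 2 * E; 2 * (1 - E), -(2 * E)]

lemma affineVec_sum (t : ℝ) : ∑ i, affineVec t i = 1 := by
  simp [affineVec]

lemma letterMatrix_col_sum (k : ℕ) (σ : Fin k) (c : Fin 2) : ∑ r, letterMatrix k σ r c = 1 := by
  fin_cases c <;> simp [letterMatrix]

lemma endMatrix_col_sum (E : ℝ) (c : Fin 2) : ∑ r, endMatrix E r c = 1 := by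
  fin_cases c <;> simp [endMatrix]; ring

lemma letterMatrix_mulVec_affineVec (k : ℕ) (σ : Fin k) (t : ℝ) :
    letterMatrix k σ *ᵥ affineVec t = affineVec (k * t + σ) := by
  ext i
  fin_cases i <;> simp [letterMatrix, affineVec, mulVec, dotProduct, Fin.sum_univ_two] <;> ring

lemma foldl_letterMatrix_mulVec (k : ℕ) (z : List (Fin k)) :
    z.foldl (fun v c => letterMatrix k c *ᵥ v) (affineVec 1) = affineVec (numeral k z) := by
  have hcast : (numeral k z : ℝ) = z.foldl (fun (t : ℝ) (c : Fin k) => k * t + (c : ℕ)) 1 := by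
    simpa [numeral] using (List.foldl_hom (g₁ := fun n (c : Fin k) => k * n + (c : ℕ)) Nat.cast
      (g₂ := fun (t : ℝ) (c : Fin k) => k * t + (c : ℕ)) (init := 1) (l := z)
      (fun n c => by push_cast; ring)).symm
  rw [hcast]
  exact List.foldl_hom affineVec (fun t c => letterMatrix_mulVec_affineVec k c t)

lemma endMatrix_mulVec_affineVec (E t : ℝ) :
    endMatrix E *ᵥ affineVec t = ![1 - 2 * (t - E), 2 * (t - E)] := by
  ext i
  fin_cases i <;> simp [endMatrix, affineVec, mulVec, dotProduct, Fin.sum_univ_two] <;> ring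

lemma acceptance_endMatrix_mulVec_affineVec (E t : ℝ) :
    |(endMatrix E *ᵥ affineVec t) 0| / ∑ i, |(endMatrix E *ᵥ affineVec t) i| =
      |1 - 2 * (t - E)| / (|1 - 2 * (t - E)| + |2 * (t - E)|) := by
  rw [endMatrix_mulVec_affineVec]
  simp [Fin.sum_univ_two]

lemma abs_div_abs_add_abs_le_two_thirds {d : ℝ} (hd : 1 ≤ |d|) :
    |1 - 2 * d| / (|1 - 2 * d| + |2 * d|) ≤ 2 / 3 := by
  have h2d : |2 * d| = 2 * |d| := by rw [abs_mul, abs_two]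
  have htri : |1 - 2 * d| ≤ 1 + 2 * |d| := by
    simpa [h2d] using abs_sub (1 : ℝ) (2 * d)
  rw [h2d, div_le_iff₀ (by linarith [abs_nonneg (1 - 2 * d)])]
  linarith

end AffineAutomaton

open AffineAutomaton

/-- over any alphabet `{0, 1, …, k-1}` (here `Fin k`, `k ≥ 2`), every
word `x` can be separated from all other words with one-sided bounded error `2/3`
by a 2-state AfA: `x` is accepted with probability 1 and every `z ≠ x` with
probability at most `2/3`. -/
theorem stmt15 (k : ℕ) (hk : 2 ≤ k) (x : List (Fin k)) :
    ∃ (A : Fin k → Matrix (Fin 2) (Fin 2) ℝ) (Ad : Matrix (Fin 2) (Fin 2) ℝ)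
      (v₀ : Fin 2 → ℝ) (j : Fin 2),
      (∀ σ : Fin k, ∀ c : Fin 2, ∑ r, A σ r c = 1) ∧
      (∀ c : Fin 2, ∑ r, Ad r c = 1) ∧
      (∑ i, v₀ i = 1) ∧
      (|Ad.mulVec (x.foldl (fun v c => (A c).mulVec v) v₀) j| /
        (∑ i, |Ad.mulVec (x.foldl (fun v c => (A c).mulVec v) v₀) i|) = 1) ∧
      (∀ z : List (Fin k), z ≠ x →
        |Ad.mulVec (z.foldl (fun v c => (A c).mulVec v) v₀) j| /
          (∑ i, |Ad.mulVec (z.foldl (fun v c => (A c).mulVec v) v₀) i|) ≤ 2 / 3) := by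
  refine ⟨letterMatrix k, endMatrix (numeral k x), affineVec 1, 0, letterMatrix_col_sum k,
    endMatrix_col_sum _, affineVec_sum 1, ?_, fun z hz => ?_⟩
  · rw [foldl_letterMatrix_mulVec, acceptance_endMatrix_mulVec_affineVec]
    simp
  · rw [foldl_letterMatrix_mulVec, acceptance_endMatrix_mulVec_affineVec]
    exact abs_div_abs_add_abs_le_two_thirds
      (one_le_abs_natCast_sub_natCast fun h => hz (numeral_injective hk h))
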